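/- Let f, d : ℝⁿ → ℝ with d convex, and suppose x is feasible for the dispatch problem with both 'charging' and 'discharging' components positive in some coordinate pair (x⁺_i > 0 and x⁻_i > 0), where the system constraints g depend on x only through the net output x⁺ − x⁻ and d is strictly increasing in each of x⁺_i and x⁻_i. Then the point x' obtained by replacing (x⁺_i, x⁻_i) with (x⁺_i − m, x⁻_i − m), m = min(x⁺_i, x⁻_i), is feasible, has the same value of f (assuming f also depends only on net output), and satisfies d(x') < d(x). Hence no optimizer of f + c·d with c > 0 has simultaneous positive charging and discharging. -/
import Mathlib


/-- No simultaneous charging and discharging at an optimum. Suppose f and g depend on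
the storage control only through the net output x⁺ − x⁻, and d is coordinatewise
strictly increasing in (x⁺, x⁻). If x = (x⁺, x⁻) is feasible with x⁺_i > 0 and
x⁻_i > 0 in some coordinate i, then x' obtained by subtracting m = min(x⁺_i, x⁻_i)
from both coordinates is feasible, has the same f-value, and d(x') < d(x); hence no
minimizer of f + c·d with c > 0 charges and discharges simultaneously. -/
theorem no_simultaneous_charge_discharge {n m : ℕ}
    (f0 : (Fin n → ℝ) → ℝ) (g0 : (Fin n → ℝ) → Fin m → ℝ)
    (d : (Fin n → ℝ) × (Fin n → ℝ) → ℝ)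
    (hdmono : ∀ p q : (Fin n → ℝ) × (Fin n → ℝ),
      (∀ j, p.1 j ≤ q.1 j) → (∀ j, p.2 j ≤ q.2 j) →
      (∃ j, p.1 j < q.1 j ∨ p.2 j < q.2 j) → d p < d q)
    (Feas : Set ((Fin n → ℝ) × (Fin n → ℝ)))
    (hFeas : Feas = {p | (∀ j, g0 (p.1 - p.2) j ≤ 0) ∧ (∀ i, 0 ≤ p.1 i) ∧ ∀ i, 0 ≤ p.2 i})
    (c : ℝ) (hc : 0 < c)
    (xp xm : Fin n → ℝ) (hx : (xp, xm) ∈ Feas)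
    (i : Fin n) (hpi : 0 < xp i) (hmi : 0 < xm i) :
    (Function.update xp i (xp i - min (xp i) (xm i)),
        Function.update xm i (xm i - min (xp i) (xm i))) ∈ Feas ∧
    f0 ((Function.update xp i (xp i - min (xp i) (xm i))) -
          (Function.update xm i (xm i - min (xp i) (xm i)))) = f0 (xp - xm) ∧
    d (Function.update xp i (xp i - min (xp i) (xm i)),
        Function.update xm i (xm i - min (xp i) (xm i))) < d (xp, xm) ∧
    ¬ (∀ p ∈ Feas, f0 (xp - xm) + c * d (xp, xm) ≤ f0 (p.1 - p.2) + c * d p) := by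
  set μ := min (xp i) (xm i) with hμ
  have hμpos : 0 < μ := lt_min hpi hmi
  set yp := Function.update xp i (xp i - μ) with hyp
  set ym := Function.update xm i (xm i - μ) with hym
  have hdiff : yp - ym = xp - xm := by
    funext j
    by_cases hj : j = i
    · subst hj
      simp [hyp, hym, Function.update_self]
    · simp [hyp, hym, Function.update_of_ne hj]
  rw [hFeas] at hx
  obtain ⟨hg, hp, hm'⟩ := hx
  have hfeas : (yp, ym) ∈ Feas := by
    rw [hFeas]
    refine ⟨by simpa [hdiff] using hg, ?_, ?_⟩
    · intro j
      by_cases hj : j = i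
      · subst hj
        simp [hyp, Function.update_self]
        exact min_le_left _ _
      · simpa [hyp, Function.update_of_ne hj] using hp j
    · intro j
      by_cases hj : j = i
      · subst hj
        simp [hym, Function.update_self]
        exact min_le_right _ _
      · simpa [hym, Function.update_of_ne hj] using hm' j
  have hd : d (yp, ym) < d (xp, xm) := by
    apply hdmono
    · intro j
      by_cases hj : j = i
      · subst hj; simp [hyp, Function.update_self]; linarith
      · simp [hyp, Function.update_of_ne hj]
    · intro j
      by_cases hj : j = i
      · subst hj; simp [hym, Function.update_self]; linarith
      · simp [hym, Function.update_of_ne hj]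
    · exact ⟨i, Or.inl (by simp [hyp, Function.update_self]; linarith)⟩
  refine ⟨hfeas, by rw [hdiff], hd, ?_⟩
  intro hopt
  have := hopt (yp, ym) hfeas
  simp only [hdiff] at this
  nlinarith
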